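/- The limit measure of Theorem 2 is a probability measure: with Δ = (c₁s − s₁c)²/(1 + |s|) and w(x) = [|s|/(π(1 − x²)√(c² − x²))] · [1 − (|α|² − |β|² + (α·conj(β) + conj(α)·β)s/c)·x] · (a₂x⁴ + a₁x² + a₀)/(c²(1 − x²)) on (−|c|, |c|), where a₀ = c², a₁ = 2s₁c(c₁s − s₁c) − c₁², a₂ = (c₁s − s₁c)², one has w(x) ≥ 0 on (−|c|, |c|) and Δ + ∫_{−|c|}^{|c|} w(x) dx = 1, for every α, β ∈ ℂ with |α|² + |β|² = 1. -/

import Mathlib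

open Filter

/-- The density part `w` of the limit law of `X_t/t` (Theorem 2), extended by `0`
outside `(-|c|, |c|)`. -/
noncomputable def wdens (c s c₁ s₁ : ℝ) (α β : ℂ) (x : ℝ) : ℝ :=
  if |x| < |c| then
    |s| / (Real.pi * (1 - x ^ 2) * Real.sqrt (c ^ 2 - x ^ 2))
      * (1 - (Complex.normSq α - Complex.normSq β
            + (α * (starRingEnd ℂ) β + (starRingEnd ℂ) α * β).re * s / c) * x)
      * (((c₁ * s - s₁ * c) ^ 2 * x ^ 4 + (2 * s₁ * c * (c₁ * s - s₁ * c) - c₁ ^ 2) * x ^ 2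
            + c ^ 2) / (c ^ 2 * (1 - x ^ 2)))
  else 0

/-!
With `d = c₁ s - s₁ c`, the relations `c² + s² = 1` and `c₁² + s₁² = 1` factor the quartic as
`(1 - x²)(c² - d² x²)`, so `w = |s| / (π c²) · (1 - γ x)(c² - d² x²) / ((1 - x²) √(c² - x²))`
with `γ` the coefficient of `x` in the middle factor. Cauchy–Schwarz gives `|γ c| ≤ 1` and
`d² ≤ 1`, hence `w ≥ 0`. This weight has an elementary primitive built from `arcsin (x / |c|)`,
`arcsin (|s| x / (|c| √(1 - x²)))`, `√(c² - x²)` and `arctan (√(c² - x²) / |s|)`; its values at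
`±|c|` give `∫ w = (|s| d² + c² - d²) / c²`, which is `1 - Δ` because `c² = (1 - |s|)(1 + |s|)`.
-/

open Real Set

lemma sin_two_mul_ne_zero_of_mem_Ico {θ : ℝ} (hθ : θ ∈ Ico 0 (2 * π)) (h0 : θ ≠ 0)
    (h1 : θ ≠ π / 2) (h2 : θ ≠ π) (h3 : θ ≠ 3 * π / 2) : sin (2 * θ) ≠ 0 := by
  rw [sin_ne_zero_iff]
  intro n hn
  have hn0 : 0 ≤ n := by
    exact_mod_cast (nonneg_of_mul_nonneg_left (hn ▸ by linarith [hθ.1]) pi_pos : (0 : ℝ) ≤ n)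
  have hn4 : n < 4 := by
    exact_mod_cast (lt_of_mul_lt_mul_right (hn ▸ by linarith [hθ.2]) pi_pos.le : (n : ℝ) < 4)
  interval_cases n <;> push_cast at hn
  · exact h0 (by linarith)
  · exact h1 (by linarith)
  · exact h2 (by linarith)
  · exact h3 (by linarith)

lemma sq_mul_sub_mul_le_one {a b c d : ℝ} (hab : a ^ 2 + b ^ 2 = 1) (hcd : c ^ 2 + d ^ 2 = 1) :
    (a * d - b * c) ^ 2 ≤ 1 := by
  nlinarith [sq_nonneg (a * c + b * d)]

lemma hasDerivAt_arcsin_div {r x : ℝ} (hr : 0 < r) (hx : |x| < r) :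
    HasDerivAt (fun y => arcsin (y / r)) (1 / √(r ^ 2 - x ^ 2)) x := by
  have hx' : |x / r| < 1 := by rwa [abs_div, abs_of_pos hr, div_lt_one hr]
  refine ((hasDerivAt_arcsin (abs_lt.1 hx').1.ne' (abs_lt.1 hx').2.ne).comp x
    ((hasDerivAt_id x).div_const r)).congr_deriv ?_
  rw [show 1 - (x / r) ^ 2 = (r ^ 2 - x ^ 2) / r ^ 2 by field_simp, sqrt_div' _ (sq_nonneg r),
    sqrt_sq hr.le]
  field_simp

lemma hasDerivAt_sqrt_sub_sq {a x : ℝ} (hx : x ^ 2 < a) :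
    HasDerivAt (fun y => √(a - y ^ 2)) (-x / √(a - x ^ 2)) x := by
  refine (((hasDerivAt_pow 2 x).const_sub a).sqrt (by linarith)).congr_deriv ?_
  have : √(a - x ^ 2) ≠ 0 := (sqrt_pos.2 (by linarith)).ne'
  field_simp
  ring

lemma hasDerivAt_arctan_sqrt_sub_sq_div {a q x : ℝ} (hq : 0 < q) (hx : x ^ 2 < a) :
    HasDerivAt (fun y => arctan (√(a - y ^ 2) / q))
      (-(q * x) / ((q ^ 2 + a - x ^ 2) * √(a - x ^ 2))) x := by
  refine ((hasDerivAt_sqrt_sub_sq hx).div_const q).arctan.congr_deriv ?_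
  have ht : √(a - x ^ 2) ^ 2 = a - x ^ 2 := sq_sqrt (by linarith)
  have : 0 < √(a - x ^ 2) := sqrt_pos.2 (by linarith)
  have : q ^ 2 + a - x ^ 2 ≠ 0 := by nlinarith
  field_simp
  rw [ht]
  ring

lemma hasDerivAt_arcsin_mul_div_sqrt {r q x : ℝ} (hr : 0 < r) (hq : 0 < q)
    (hrq : r ^ 2 + q ^ 2 = 1) (hx : |x| < r) :
    HasDerivAt (fun y => arcsin (q * y / (r * √(1 - y ^ 2))))
      (q / ((1 - x ^ 2) * √(r ^ 2 - x ^ 2))) x := by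
  have hxr : x ^ 2 < r ^ 2 := by nlinarith [sq_abs x, abs_nonneg x]
  have hx1 : x ^ 2 < 1 := by nlinarith
  have hu2 : √(1 - x ^ 2) ^ 2 = 1 - x ^ 2 := sq_sqrt (by linarith)
  have ht2 : √(r ^ 2 - x ^ 2) ^ 2 = r ^ 2 - x ^ 2 := sq_sqrt (by linarith)
  have hu0 : 0 < √(1 - x ^ 2) := sqrt_pos.2 (by linarith)
  have ht0 : 0 < √(r ^ 2 - x ^ 2) := sqrt_pos.2 (by linarith)
  have hinner : HasDerivAt (fun y => q * y / (r * √(1 - y ^ 2)))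
      (q / (r * √(1 - x ^ 2) ^ 3)) x := by
    refine (((hasDerivAt_id x).const_mul q).div
      ((hasDerivAt_sqrt_sub_sq hx1).const_mul r) (by positivity)).congr_deriv ?_
    simp only [id, mul_one]
    field_simp
    linear_combination hu2
  have hkey : 1 - (q * x / (r * √(1 - x ^ 2))) ^ 2
      = (√(r ^ 2 - x ^ 2) / (r * √(1 - x ^ 2))) ^ 2 := by
    field_simp
    linear_combination r ^ 2 * hu2 - x ^ 2 * hrq - ht2
  have hlt : |q * x / (r * √(1 - x ^ 2))| < 1 := by
    rw [← sq_lt_one_iff_abs_lt_one]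
    nlinarith [hkey, sq_pos_of_pos (div_pos ht0 (mul_pos hr hu0))]
  refine ((hasDerivAt_arcsin (abs_lt.1 hlt).1.ne' (abs_lt.1 hlt).2.ne).comp x
    hinner).congr_deriv ?_
  rw [hkey, sqrt_sq (by positivity)]
  field_simp
  rw [hu2, div_self (sub_pos.2 hx1).ne']

noncomputable def walkWeight (r d γ x : ℝ) : ℝ :=
  (1 - γ * x) * (r ^ 2 - d ^ 2 * x ^ 2) / ((1 - x ^ 2) * √(r ^ 2 - x ^ 2))

noncomputable def walkWeightPrimitive (r q d γ x : ℝ) : ℝ :=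
  d ^ 2 * arcsin (x / r) + (r ^ 2 - d ^ 2) / q * arcsin (q * x / (r * √(1 - x ^ 2)))
    + γ * d ^ 2 * √(r ^ 2 - x ^ 2) + γ * (r ^ 2 - d ^ 2) / q * arctan (√(r ^ 2 - x ^ 2) / q)

section walkWeight

variable {r q d γ : ℝ}

lemma walkWeight_nonneg (hr : r ≤ 1) (hd : d ^ 2 ≤ 1) (hγ : |γ| * r ≤ 1) {x : ℝ} (hx : |x| < r) :
    0 ≤ walkWeight r d γ x := by
  have hxr : x ^ 2 < r ^ 2 := by nlinarith [sq_abs x, abs_nonneg x]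
  have hγx : γ * x ≤ 1 := by
    calc γ * x ≤ |γ| * |x| := by rw [← abs_mul]; exact le_abs_self _
      _ ≤ |γ| * r := by gcongr
      _ ≤ 1 := hγ
  have hdx : d ^ 2 * x ^ 2 ≤ x ^ 2 := mul_le_of_le_one_left (sq_nonneg x) hd
  have hx1 : 0 < 1 - x ^ 2 := by nlinarith [abs_nonneg x]
  unfold walkWeight
  apply div_nonneg (mul_nonneg (by linarith) (by linarith))
  positivity

variable (hr : 0 < r) (hq : 0 < q) (hrq : r ^ 2 + q ^ 2 = 1)
include hr hq hrq

lemma hasDerivAt_walkWeightPrimitive {x : ℝ} (hx : |x| < r) :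
    HasDerivAt (walkWeightPrimitive r q d γ) (walkWeight r d γ x) x := by
  have hxr : x ^ 2 < r ^ 2 := by nlinarith [sq_abs x, abs_nonneg x]
  refine (((((hasDerivAt_arcsin_div hr hx).const_mul (d ^ 2)).add
    ((hasDerivAt_arcsin_mul_div_sqrt hr hq hrq hx).const_mul ((r ^ 2 - d ^ 2) / q))).add
    ((hasDerivAt_sqrt_sub_sq hxr).const_mul (γ * d ^ 2))).add
    ((hasDerivAt_arctan_sqrt_sub_sq_div hq hxr).const_mul
      (γ * (r ^ 2 - d ^ 2) / q))).congr_deriv ?_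
  have ht : 0 < √(r ^ 2 - x ^ 2) := sqrt_pos.2 (by linarith)
  have hx1 : 0 < 1 - x ^ 2 := by nlinarith
  rw [show q ^ 2 + r ^ 2 - x ^ 2 = 1 - x ^ 2 by linarith, walkWeight]
  field_simp
  ring

lemma continuousOn_walkWeightPrimitive :
    ContinuousOn (walkWeightPrimitive r q d γ) (Icc (-r) r) := by
  have hden : ∀ y ∈ Icc (-r) r, r * √(1 - y ^ 2) ≠ 0 := fun y hy =>
    mul_ne_zero hr.ne' (sqrt_pos.2 (by nlinarith [sq_le_sq' hy.1 hy.2])).ne'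
  unfold walkWeightPrimitive
  fun_prop (disch := exact hden)

lemma walkWeightPrimitive_sub :
    walkWeightPrimitive r q d γ r - walkWeightPrimitive r q d γ (-r)
      = π * (d ^ 2 + (r ^ 2 - d ^ 2) / q) := by
  have hsq : √(1 - r ^ 2) = q := by rw [show 1 - r ^ 2 = q ^ 2 by linarith, sqrt_sq hq.le]
  simp only [walkWeightPrimitive, neg_sq, sub_self, sqrt_zero, zero_div, arctan_zero, hsq,
    neg_div, mul_neg, div_self hr.ne', show q * r / (r * q) = 1 by field_simp, arcsin_one,
    arcsin_neg, mul_zero]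
  field_simp
  ring

lemma integral_walkWeight (hd : d ^ 2 ≤ 1) (hγ : |γ| * r ≤ 1) :
    ∫ x in -r..r, walkWeight r d γ x = π * (d ^ 2 + (r ^ 2 - d ^ 2) / q) := by
  have hr1 : r ≤ 1 := by nlinarith
  have hderiv : ∀ x ∈ Ioo (-r) r,
      HasDerivAt (walkWeightPrimitive r q d γ) (walkWeight r d γ x) x := fun x hx =>
    hasDerivAt_walkWeightPrimitive hr hq hrq (abs_lt.2 hx)
  have hcont := continuousOn_walkWeightPrimitive (d := d) (γ := γ) hr hq hrq
  have hint : IntervalIntegrable (walkWeight r d γ) MeasureTheory.volume (-r) r :=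
    (intervalIntegrable_iff_integrableOn_Ioc_of_le (by linarith)).2
      (intervalIntegral.integrableOn_deriv_of_nonneg hcont hderiv fun x hx =>
        walkWeight_nonneg hr1 hd hγ (abs_lt.2 hx))
  rw [intervalIntegral.integral_eq_sub_of_hasDerivAt_of_le (by linarith) hcont hderiv hint,
    walkWeightPrimitive_sub hr hq hrq]

end walkWeight

noncomputable def asymmetryCoeff (c s : ℝ) (α β : ℂ) : ℝ :=
  Complex.normSq α - Complex.normSq β + (α * (starRingEnd ℂ) β + (starRingEnd ℂ) α * β).re * s / c

lemma sq_normSq_sub_add_sq_re_le (α β : ℂ) :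
    (Complex.normSq α - Complex.normSq β) ^ 2
      + (α * (starRingEnd ℂ) β + (starRingEnd ℂ) α * β).re ^ 2
      ≤ (Complex.normSq α + Complex.normSq β) ^ 2 := by
  simp only [Complex.normSq_apply, Complex.add_re, Complex.mul_re, Complex.conj_re,
    Complex.conj_im]
  nlinarith [sq_nonneg (α.re * β.im - α.im * β.re)]

lemma abs_asymmetryCoeff_mul_le_one {c s : ℝ} {α β : ℂ} (hc : c ≠ 0) (hcs : c ^ 2 + s ^ 2 = 1)
    (hαβ : Complex.normSq α + Complex.normSq β = 1) :
    |asymmetryCoeff c s α β| * |c| ≤ 1 := by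
  set u := Complex.normSq α - Complex.normSq β
  set v := (α * (starRingEnd ℂ) β + (starRingEnd ℂ) α * β).re
  have huv : u ^ 2 + v ^ 2 ≤ 1 := by
    simpa only [hαβ, one_pow] using sq_normSq_sub_add_sq_re_le α β
  have hγc : asymmetryCoeff c s α β * c = u * c + v * s := by
    simp only [asymmetryCoeff]
    field_simp
    ring
  rw [← abs_mul, ← sq_le_one_iff_abs_le_one, hγc]
  nlinarith [sq_nonneg (u * s - v * c)]

section wdens

variable {c s c₁ s₁ : ℝ} {α β : ℂ}

lemma wdens_eq_indicator (hc : c ≠ 0) (hcs : c ^ 2 + s ^ 2 = 1) (h₁ : c₁ ^ 2 + s₁ ^ 2 = 1) :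
    wdens c s c₁ s₁ α β = (Ioo (-|c|) |c|).indicator fun x =>
      |s| / (π * c ^ 2) * walkWeight |c| (c₁ * s - s₁ * c) (asymmetryCoeff c s α β) x := by
  ext x
  by_cases hx : |x| < |c|
  · have hxc : x ^ 2 < c ^ 2 := sq_lt_sq.2 hx
    have hx1 : 0 < 1 - x ^ 2 := by nlinarith
    have ht : 0 < √(c ^ 2 - x ^ 2) := sqrt_pos.2 (by linarith)
    have hquartic : (c₁ * s - s₁ * c) ^ 2 * x ^ 4
        + (2 * s₁ * c * (c₁ * s - s₁ * c) - c₁ ^ 2) * x ^ 2 + c ^ 2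
        = (1 - x ^ 2) * (c ^ 2 - (c₁ * s - s₁ * c) ^ 2 * x ^ 2) := by
      linear_combination x ^ 2 * c₁ ^ 2 * hcs - x ^ 2 * c ^ 2 * h₁
    rw [wdens, if_pos hx, indicator_of_mem (mem_Ioo.2 (abs_lt.1 hx)), walkWeight, asymmetryCoeff,
      sq_abs, hquartic]
    field_simp
  · rw [wdens, if_neg hx, indicator_of_notMem fun h => hx (abs_lt.2 (mem_Ioo.1 h))]

lemma wdens_nonneg (hc : c ≠ 0) (hcs : c ^ 2 + s ^ 2 = 1) (h₁ : c₁ ^ 2 + s₁ ^ 2 = 1)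
    (hαβ : Complex.normSq α + Complex.normSq β = 1) {x : ℝ} (hx : |x| < |c|) :
    0 ≤ wdens c s c₁ s₁ α β x := by
  rw [wdens_eq_indicator hc hcs h₁, indicator_of_mem (mem_Ioo.2 (abs_lt.1 hx))]
  refine mul_nonneg (by positivity) (walkWeight_nonneg ?_ (sq_mul_sub_mul_le_one h₁ hcs)
    (abs_asymmetryCoeff_mul_le_one hc hcs hαβ) hx)
  rw [← sq_le_one_iff_abs_le_one]
  nlinarith

lemma integral_wdens (hc : c ≠ 0) (hs : s ≠ 0) (hcs : c ^ 2 + s ^ 2 = 1)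
    (h₁ : c₁ ^ 2 + s₁ ^ 2 = 1) (hαβ : Complex.normSq α + Complex.normSq β = 1) :
    ∫ x, wdens c s c₁ s₁ α β x
      = (|s| * (c₁ * s - s₁ * c) ^ 2 + c ^ 2 - (c₁ * s - s₁ * c) ^ 2) / c ^ 2 := by
  have hcs' : |c| ^ 2 + |s| ^ 2 = 1 := by rwa [sq_abs, sq_abs]
  rw [wdens_eq_indicator hc hcs h₁, MeasureTheory.integral_indicator measurableSet_Ioo,
    ← MeasureTheory.integral_Ioc_eq_integral_Ioo,
    ← intervalIntegral.integral_of_le (neg_le_self (abs_nonneg c)),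
    intervalIntegral.integral_const_mul,
    integral_walkWeight (abs_pos.2 hc) (abs_pos.2 hs) hcs' (sq_mul_sub_mul_le_one h₁ hcs)
      (abs_asymmetryCoeff_mul_le_one hc hcs hαβ), sq_abs]
  have hs' : |s| ≠ 0 := abs_ne_zero.2 hs
  field_simp
  ring

end wdens

theorem stmt18_general
    (θ θ₁ : ℝ)
    (hθmem : θ ∈ Set.Ico (0 : ℝ) (2 * Real.pi))
    (hθ0 : θ ≠ 0) (hθhalf : θ ≠ Real.pi / 2) (hθpi : θ ≠ Real.pi)
    (hθ3half : θ ≠ 3 * Real.pi / 2)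
    (c s c₁ s₁ : ℝ)
    (hc : c = Real.cos θ) (hs : s = Real.sin θ)
    (hc₁ : c₁ = Real.cos θ₁) (hs₁ : s₁ = Real.sin θ₁)
    (α β : ℂ) (hαβ : Complex.normSq α + Complex.normSq β = 1) :
    (∀ x : ℝ, |x| < |c| → 0 ≤ wdens c s c₁ s₁ α β x)
    ∧ (c₁ * s - s₁ * c) ^ 2 / (1 + |s|) + (∫ x : ℝ, wdens c s c₁ s₁ α β x) = 1 := by
  have hsc := sin_two_mul_ne_zero_of_mem_Ico hθmem hθ0 hθhalf hθpi hθ3half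
  rw [sin_two_mul, ← hs, ← hc] at hsc
  have hc0 : c ≠ 0 := right_ne_zero_of_mul hsc
  have hs0 : s ≠ 0 := right_ne_zero_of_mul (left_ne_zero_of_mul hsc)
  have hcs : c ^ 2 + s ^ 2 = 1 := hc ▸ hs ▸ cos_sq_add_sin_sq θ
  have h₁ : c₁ ^ 2 + s₁ ^ 2 = 1 := hc₁ ▸ hs₁ ▸ cos_sq_add_sin_sq θ₁
  refine ⟨fun x hx => wdens_nonneg hc0 hcs h₁ hαβ hx, ?_⟩
  rw [integral_wdens hc0 hs0 hcs h₁ hαβ]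
  have h1s : 1 + |s| ≠ 0 := by positivity
  field_simp
  linear_combination (c₁ * s - s₁ * c) ^ 2 * (hcs + sq_abs s)

theorem stmt18
    (θ θ₁ : ℝ)
    (hθmem : θ ∈ Set.Ico (0 : ℝ) (2 * Real.pi))
    (hθ₁mem : θ₁ ∈ Set.Ico (0 : ℝ) (2 * Real.pi))
    (hθ0 : θ ≠ 0) (hθhalf : θ ≠ Real.pi / 2) (hθpi : θ ≠ Real.pi)
    (hθ3half : θ ≠ 3 * Real.pi / 2)
    (c s c₁ s₁ : ℝ)
    (hc : c = Real.cos θ) (hs : s = Real.sin θ)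
    (hc₁ : c₁ = Real.cos θ₁) (hs₁ : s₁ = Real.sin θ₁)
    (α β : ℂ) (hαβ : Complex.normSq α + Complex.normSq β = 1) :
    (∀ x : ℝ, |x| < |c| → 0 ≤ wdens c s c₁ s₁ α β x)
    ∧ (c₁ * s - s₁ * c) ^ 2 / (1 + |s|) + (∫ x : ℝ, wdens c s c₁ s₁ α β x) = 1 :=
  stmt18_general θ θ₁ hθmem hθ0 hθhalf hθpi hθ3half c s c₁ s₁ hc hs hc₁ hs₁ α β hαβ
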